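/- arXiv:1207.6488 — 2 statements merged into one kernel-verified Lean document; each statement's English description precedes it below -/
import Mathlib

section
/- For each integer n ≥ 2, let T_1, …, T_n be independent random variables with T_i exponentially distributed with rate i, and let K be an independent random index in {1, …, n−1} with P(K = k) = 2(n+1)/((n−1)(k+2)(k+1)); set τ^{(n)} = T_{K+1} + … + T_n. Then for every real y with 0 < y < 1, lim_{n→∞} n^y · E[exp(−y·τ^{(n)})] = ((1+y)/(1−y))·Γ(y+1). -/
/-!
Conditioning on `K`, independence gives
`E[e^{-yτ}] = ∑ₖ P(K = k) ∏_{k<i≤n} i/(i+y)`, the product being the Laplace transform of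
`T_{k+1} + ⋯ + T_n`. With `bₖ = ∏_{i≤k} (1 + y/i)` the product equals `bₖ / bₙ`, and
`bₖ / ((k+1)(k+2)) = (bₖ/(k+1) - b_{k+1}/(k+2)) / (1-y)` telescopes, so that
`E[e^{-yτ}] = 2(n+1)/(n-1) · ((1+y)/(2(1-y)) / bₙ - 1/((1-y)(n+1)))`.
Finally `n^y / bₙ = y · GammaSeq y n → yΓ(y) = Γ(y+1)` by Euler's limit formula.
-/

open MeasureTheory ProbabilityTheory Filter Topology

open Real Set in
lemma ProbabilityTheory.mgf_id_expMeasure {r t : ℝ} (hr : 0 < r) (ht : t < r) :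
    mgf id (expMeasure r) t = r / (r - t) := by
  have hpdf : ∀ x, (exponentialPDF r x).toReal * exp (t * x)
      = (Ici 0).indicator (fun x => r * exp ((t - r) * x)) x := by
    intro x
    rw [exponentialPDF, ENNReal.toReal_ofReal (exponentialPDFReal_nonneg hr x),
      exponentialPDFReal, gammaPDFReal]
    by_cases hx : 0 ≤ x
    · simp only [hx, if_true, indicator_of_mem (mem_Ici.mpr hx), rpow_one, Gamma_one, div_one,
        sub_self, rpow_zero, mul_one, mul_assoc, ← exp_add]
      ring_nf
    · simp [hx]
  calc mgf id (expMeasure r) t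
      = ∫ x, (exponentialPDF r x).toReal * exp (t * x) :=
        integral_withDensity_eq_integral_toReal_smul
          (measurable_exponentialPDFReal r).ennreal_ofReal
          (ae_of_all _ fun _ => ENNReal.ofReal_lt_top) _
    _ = r * ∫ x in Ioi 0, exp ((t - r) * x) := by
        simp_rw [hpdf]
        rw [integral_indicator measurableSet_Ici, integral_Ici_eq_integral_Ioi, integral_const_mul]
    _ = r / (r - t) := by
        rw [integral_exp_mul_Ioi (sub_neg.mpr ht), mul_zero, exp_zero, ← neg_sub r t, div_neg,
          neg_div, neg_neg, mul_one_div]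

lemma ProbabilityTheory.iIndepFun.mgf_sum_of_map_eq_expMeasure {Ω ι : Type*}
    [MeasurableSpace Ω] {μ : Measure Ω} {X : ι → Ω → ℝ} (hindep : iIndepFun X μ)
    (hmeas : ∀ i, Measurable (X i))
    {r : ι → ℝ} {s : Finset ι} (hX : ∀ i ∈ s, μ.map (X i) = expMeasure (r i))
    (hr : ∀ i ∈ s, 0 < r i) {t : ℝ} (ht : ∀ i ∈ s, t < r i) :
    mgf (∑ i ∈ s, X i) μ t = ∏ i ∈ s, r i / (r i - t) := by
  rw [hindep.mgf_sum hmeas]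
  refine Finset.prod_congr rfl fun i hi => ?_
  rw [← mgf_id_map (hmeas i).aemeasurable, hX i hi, mgf_id_expMeasure (hr i hi) (ht i hi)]

lemma Fin.sum_filter_le_add_one_eq_sum_Icc {M : Type*} [AddCommMonoid M] (n k : ℕ)
    (f : ℕ → M) :
    ∑ j ∈ Finset.univ.filter (fun j : Fin n => k ≤ (j : ℕ)), f (j + 1)
      = ∑ i ∈ Finset.Icc (k + 1) n, f i := by
  refine Finset.sum_bij (fun j _ => (j : ℕ) + 1) (fun j hj => ?_) (fun a _ b _ h => ?_)
    (fun i hi => ?_) (fun _ _ => rfl)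
  · simp only [Finset.mem_filter, Finset.mem_univ, true_and, Finset.mem_Icc] at hj ⊢
    omega
  · exact Fin.ext (by omega)
  · simp only [Finset.mem_filter, Finset.mem_univ, true_and, Finset.mem_Icc] at hi ⊢
    exact ⟨⟨i - 1, by omega⟩, by simp only; omega, by simp only; omega⟩

lemma integral_comp_eq_sum_of_indepFun {Ω β ι : Type*} [MeasurableSpace Ω] {μ : Measure Ω}
    [MeasurableSpace β] [MeasurableSpace ι] [MeasurableSingletonClass ι]
    {X : Ω → β} {K : Ω → ι} (hK : Measurable K) (hXK : IndepFun X K μ)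
    {S : Finset ι} (hKS : ∀ ω, K ω ∈ S) {g : ι → β → ℝ} (hg : ∀ k, Measurable (g k))
    (hgX : ∀ k ∈ S, Integrable (fun ω => g k (X ω)) μ) :
    ∫ ω, g (K ω) (X ω) ∂μ = ∑ k ∈ S, μ.real {ω | K ω = k} * ∫ ω, g k (X ω) ∂μ := by
  classical
  set δ : ι → ι → ℝ := fun k i => if i = k then 1 else 0
  have hδ : ∀ k, Measurable (δ k) := fun k =>
    measurable_const.ite (measurableSet_singleton k) measurable_const
  have hδ_le : ∀ k i, ‖δ k i‖ ≤ 1 := fun k i => by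
    by_cases h : i = k <;> simp [δ, h]
  have hsplit : ∀ ω, g (K ω) (X ω) = ∑ k ∈ S, δ k (K ω) * g k (X ω) := fun ω => by
    simp [δ, hKS ω]
  have hint : ∀ k ∈ S, Integrable (fun ω => δ k (K ω) * g k (X ω)) μ := fun k hk =>
    (hgX k hk).bdd_mul ((hδ k).comp hK).aestronglyMeasurable
      (ae_of_all _ fun ω => hδ_le k (K ω))
  have hweight : ∀ k, ∫ ω, δ k (K ω) ∂μ = μ.real {ω | K ω = k} := fun k =>
    integral_indicator_one (hK (measurableSet_singleton k))
  simp_rw [hsplit]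
  rw [integral_finsetSum _ hint]
  refine Finset.sum_congr rfl fun k hk => ?_
  rw [← hweight k]
  exact (hXK.comp (hg k) (hδ k)).symm.integral_fun_mul_eq_mul_integral
    ((hδ k).comp hK).aestronglyMeasurable (hgX k hk).aestronglyMeasurable

section Laplace

open Finset Real

variable {Ω : Type*} [MeasurableSpace Ω] {μ : Measure Ω} {n : ℕ} {T : ℕ → Ω → ℝ}

lemma mgf_sum_Icc_neg_eq_prod (hTmeas : ∀ i, Measurable (T i)) (hTindep : iIndepFun T μ)
    (hTexp : ∀ i ∈ Icc 1 n, μ.map (T i) = expMeasure i) {y : ℝ} (hy : -1 < y) (k : ℕ) :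
    mgf (∑ i ∈ Icc (k + 1) n, T i) μ (-y) = ∏ i ∈ Icc (k + 1) n, (i : ℝ) / (i + y) := by
  have hone : ∀ i ∈ Icc (k + 1) n, (1 : ℝ) ≤ i := fun i hi => by
    exact_mod_cast (by have := (mem_Icc.mp hi).1; omega : 1 ≤ i)
  simpa only [sub_neg_eq_add] using hTindep.mgf_sum_of_map_eq_expMeasure hTmeas
    (r := fun i => (i : ℝ)) (fun i hi => hTexp i (Icc_subset_Icc_left (Nat.le_add_left 1 k) hi))
    (fun i hi => by linarith [hone i hi]) (t := -y) (fun i hi => by linarith [hone i hi])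

lemma integrable_exp_neg_mul_sum_Icc (hTmeas : ∀ i, Measurable (T i)) (hTindep : iIndepFun T μ)
    (hTexp : ∀ i ∈ Icc 1 n, μ.map (T i) = expMeasure i) {y : ℝ} (hy : -1 < y) (k : ℕ) :
    Integrable (fun ω => exp (-y * ∑ i ∈ Icc (k + 1) n, T i ω)) μ := by
  have : IsProbabilityMeasure μ := hTindep.isProbabilityMeasure
  have hpos : 0 < ∏ i ∈ Icc (k + 1) n, (i : ℝ) / (i + y) := prod_pos fun i hi => by
    have : (1 : ℝ) ≤ i := by exact_mod_cast (by have := (mem_Icc.mp hi).1; omega : 1 ≤ i)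
    exact div_pos (by linarith) (by linarith)
  rw [← mgf_sum_Icc_neg_eq_prod hTmeas hTindep hTexp hy k, mgf_pos_iff] at hpos
  simpa only [Finset.sum_apply] using hpos

lemma integral_exp_neg_mul_sum_Icc_of_indepFun (hTmeas : ∀ i, Measurable (T i))
    (hTindep : iIndepFun T μ) (hTexp : ∀ i ∈ Icc 1 n, μ.map (T i) = expMeasure i)
    {K : Ω → ℕ} (hKmeas : Measurable K) {S : Finset ℕ} (hKS : ∀ ω, K ω ∈ S)
    (hKindep : IndepFun (fun ω (i : Fin n) => T (i + 1) ω) K μ) {y : ℝ} (hy : -1 < y) :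
    ∫ ω, exp (-y * ∑ i ∈ Icc (K ω + 1) n, T i ω) ∂μ
      = ∑ k ∈ S, μ.real {ω | K ω = k} * ∏ i ∈ Icc (k + 1) n, (i : ℝ) / (i + y) := by
  -- `K` is only assumed independent of the vector `(T 1, …, T n)`, hence the detour through `g`.
  set g : ℕ → (Fin n → ℝ) → ℝ := fun k v => exp (-y * ∑ j ∈ univ.filter (k ≤ ·.val), v j)
  have hgT : ∀ k ω, g k (fun i => T (i + 1) ω) = exp (-y * ∑ i ∈ Icc (k + 1) n, T i ω) :=
    fun k ω => by simp only [g, Fin.sum_filter_le_add_one_eq_sum_Icc n k (T · ω)]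
  calc ∫ ω, exp (-y * ∑ i ∈ Icc (K ω + 1) n, T i ω) ∂μ
      = ∫ ω, g (K ω) (fun i => T (i + 1) ω) ∂μ := by simp_rw [hgT]
    _ = ∑ k ∈ S, μ.real {ω | K ω = k} * ∫ ω, g k (fun i => T (i + 1) ω) ∂μ := by
      refine integral_comp_eq_sum_of_indepFun hKmeas hKindep hKS (fun k => by fun_prop)
        fun k _ => ?_
      simpa only [hgT] using integrable_exp_neg_mul_sum_Icc hTmeas hTindep hTexp hy k
    _ = _ := by
      simp_rw [hgT]
      refine sum_congr rfl fun k _ => ?_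
      rw [← mgf_sum_Icc_neg_eq_prod hTmeas hTindep hTexp hy k]
      simp only [mgf, Finset.sum_apply]

end Laplace

section RisingRatio

open Finset

-- `risingRatio y k = (1 + y)(2 + y)⋯(k + y) / k!`
noncomputable def risingRatio (y : ℝ) (k : ℕ) : ℝ := ∏ i ∈ Icc 1 k, (1 + y / i)

lemma risingRatio_zero (y : ℝ) : risingRatio y 0 = 1 := rfl

lemma risingRatio_succ (y : ℝ) (k : ℕ) :
    risingRatio y (k + 1) = risingRatio y k * (1 + y / (k + 1)) := by
  rw [risingRatio, prod_Icc_succ_top (Nat.le_add_left 1 k), Nat.cast_succ]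
  rfl

lemma risingRatio_pos {y : ℝ} (hy : -1 < y) (k : ℕ) : 0 < risingRatio y k := by
  refine prod_pos fun i hi => ?_
  have hi : (1 : ℝ) ≤ i := by exact_mod_cast (mem_Icc.mp hi).1
  rw [one_add_div (by positivity)]
  exact div_pos (by linarith) (by positivity)

lemma prod_Icc_div_add_eq_risingRatio_div {y : ℝ} (hy : -1 < y) {k n : ℕ} (hkn : k ≤ n) :
    ∏ i ∈ Icc (k + 1) n, (i : ℝ) / (i + y) = risingRatio y k / risingRatio y n := by
  induction n, hkn using Nat.le_induction with
  | base => simp [(risingRatio_pos hy k).ne']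
  | succ n hkn ih =>
    have hn : (0 : ℝ) < n + 1 + y := by linarith [(Nat.cast_nonneg n : (0 : ℝ) ≤ n)]
    rw [prod_Icc_succ_top (by omega), ih, risingRatio_succ]
    have := (risingRatio_pos hy n).ne'
    push_cast
    field_simp

lemma sum_risingRatio_div {y : ℝ} (hy : y ≠ 1) (N : ℕ) :
    ∑ k ∈ Icc 1 N, risingRatio y k / ((k + 2) * (k + 1))
      = (1 + y) / (2 * (1 - y)) - risingRatio y (N + 1) / ((1 - y) * (N + 2)) := by
  have h1y : 1 - y ≠ 0 := sub_ne_zero.mpr hy.symm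
  induction N with
  | zero =>
    rw [Icc_eq_empty_of_lt zero_lt_one, sum_empty, zero_add, risingRatio_succ, risingRatio_zero]
    push_cast
    field_simp
    ring
  | succ N ih =>
    rw [sum_Icc_succ_top (by omega), ih, risingRatio_succ y (N + 1)]
    push_cast
    field_simp
    ring

lemma risingRatio_mul_factorial_mul (y : ℝ) (n : ℕ) :
    risingRatio y n * n.factorial * y = ∏ j ∈ range (n + 1), (y + j) := by
  induction n with
  | zero => simp [risingRatio_zero]
  | succ n ih =>
    rw [prod_range_succ, ← ih, risingRatio_succ, Nat.factorial_succ]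
    push_cast
    field_simp
    ring

lemma natCast_rpow_div_risingRatio {y : ℝ} (hy : -1 < y) (hy0 : y ≠ 0) (n : ℕ) :
    (n : ℝ) ^ y / risingRatio y n = y * Real.GammaSeq y n := by
  have := (risingRatio_pos hy n).ne'
  rw [Real.GammaSeq, ← risingRatio_mul_factorial_mul]
  field_simp

lemma tendsto_natCast_rpow_div_risingRatio {y : ℝ} (hy : -1 < y) :
    Tendsto (fun n : ℕ => (n : ℝ) ^ y / risingRatio y n) atTop (𝓝 (Real.Gamma (y + 1))) := by
  rcases eq_or_ne y 0 with rfl | hy0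
  · simp [risingRatio]
  simp_rw [natCast_rpow_div_risingRatio hy hy0, Real.Gamma_add_one hy0]
  exact (Real.GammaSeq_tendsto_Gamma y).const_mul y

lemma sum_prod_Icc_div_add_div_eq {y : ℝ} (hy : -1 < y) (hy1 : y ≠ 1) {n : ℕ} (hn : 1 ≤ n) :
    ∑ k ∈ Icc 1 (n - 1), (∏ i ∈ Icc (k + 1) n, (i : ℝ) / (i + y)) / ((k + 2) * (k + 1))
      = (1 + y) / (2 * (1 - y)) / risingRatio y n - 1 / ((1 - y) * (n + 1)) := by
  have hb := (risingRatio_pos hy n).ne'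
  have h1y : 1 - y ≠ 0 := sub_ne_zero.mpr hy1.symm
  calc ∑ k ∈ Icc 1 (n - 1), (∏ i ∈ Icc (k + 1) n, (i : ℝ) / (i + y)) / ((k + 2) * (k + 1))
      = (∑ k ∈ Icc 1 (n - 1), risingRatio y k / ((k + 2) * (k + 1))) / risingRatio y n := by
        rw [sum_div]
        refine sum_congr rfl fun k hk => ?_
        rw [prod_Icc_div_add_eq_risingRatio_div hy (by have := (mem_Icc.mp hk).2; omega)]
        ring
    _ = _ := by
        rw [sum_risingRatio_div hy1, Nat.sub_add_cancel hn, Nat.cast_sub hn, Nat.cast_one,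
          sub_add_eq_add_sub, add_sub_assoc, show (2 : ℝ) - 1 = 1 by norm_num]
        field_simp

lemma tendsto_natCast_rpow_div_add_one {y : ℝ} (hy : y < 1) :
    Tendsto (fun n : ℕ => (n : ℝ) ^ y / (n + 1)) atTop (𝓝 0) := by
  have hpow : Tendsto (fun n : ℕ => (n : ℝ) ^ (y - 1)) atTop (𝓝 0) := by
    simpa [neg_sub, Function.comp_def] using
      (tendsto_rpow_neg_atTop (sub_pos.mpr hy)).comp tendsto_natCast_atTop_atTop
  have h := hpow.mul (tendsto_natCast_div_add_atTop (1 : ℝ))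
  rw [zero_mul] at h
  refine h.congr' ?_
  filter_upwards [eventually_gt_atTop 0] with n hn
  have hn : (0 : ℝ) < n := by exact_mod_cast hn
  rw [Real.rpow_sub_one hn.ne']
  field_simp

lemma tendsto_natCast_add_one_div_sub_one :
    Tendsto (fun n : ℕ => ((n : ℝ) + 1) / (n - 1)) atTop (𝓝 1) := by
  have h := (tendsto_natCast_div_add_atTop (-1 : ℝ)).div (tendsto_natCast_div_add_atTop (1 : ℝ))
    one_ne_zero
  rw [div_one] at h
  refine h.congr' ?_
  filter_upwards [eventually_gt_atTop 1] with n hn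
  have hn : (1 : ℝ) < n := by exact_mod_cast hn
  have : (n : ℝ) - 1 ≠ 0 := by linarith
  simp only [Pi.div_apply, ← sub_eq_add_neg]
  field_simp

lemma tendsto_natCast_rpow_mul_sum_yule {y : ℝ} (hy : -1 < y) (hy1 : y < 1) :
    Tendsto (fun n : ℕ => (n : ℝ) ^ y * ∑ k ∈ Icc 1 (n - 1),
        2 * ((n : ℝ) + 1) / ((n - 1) * (k + 2) * (k + 1)) * ∏ i ∈ Icc (k + 1) n, (i : ℝ) / (i + y))
      atTop (𝓝 ((1 + y) / (1 - y) * Real.Gamma (y + 1))) := by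
  have h1y : 1 - y ≠ 0 := by linarith
  have hlim := (tendsto_natCast_add_one_div_sub_one.const_mul 2).mul
    (((tendsto_natCast_rpow_div_risingRatio hy).const_mul
      ((1 + y) / (2 * (1 - y)))).sub ((tendsto_natCast_rpow_div_add_one hy1).const_mul (1 - y)⁻¹))
  rw [show 2 * 1 * ((1 + y) / (2 * (1 - y)) * Real.Gamma (y + 1) - (1 - y)⁻¹ * 0)
    = (1 + y) / (1 - y) * Real.Gamma (y + 1) by rw [mul_zero, sub_zero]; field_simp] at hlim
  refine hlim.congr' ?_
  filter_upwards [eventually_ge_atTop 2] with n hn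
  have hn' : (2 : ℝ) ≤ n := by exact_mod_cast hn
  have : (n : ℝ) - 1 ≠ 0 := by linarith
  have := (risingRatio_pos hy n).ne'
  have hsum : ∑ k ∈ Icc 1 (n - 1),
      2 * ((n : ℝ) + 1) / ((n - 1) * (k + 2) * (k + 1)) * ∏ i ∈ Icc (k + 1) n, (i : ℝ) / (i + y)
      = 2 * ((n + 1) / (n - 1)) * ∑ k ∈ Icc 1 (n - 1),
          (∏ i ∈ Icc (k + 1) n, (i : ℝ) / (i + y)) / ((k + 2) * (k + 1)) := by
    rw [mul_sum]
    refine sum_congr rfl fun k _ => ?_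
    field_simp
  rw [hsum, sum_prod_Icc_div_add_div_eq hy hy1.ne (by omega)]
  field_simp

end RisingRatio

theorem statement10_general
    (Ω : ℕ → Type*) [∀ n, MeasureSpace (Ω n)]
    (T : ∀ n, ℕ → Ω n → ℝ) (K : ∀ n, Ω n → ℕ)
    (hTmeas : ∀ n i, Measurable (T n i))
    (hTindep : ∀ n, iIndepFun (T n) ℙ)
    (hTexp : ∀ n, ∀ i ∈ Finset.Icc 1 n, Measure.map (T n i) ℙ = expMeasure i)
    (hKmeas : ∀ n, Measurable (K n))
    (hKrange : ∀ n, 2 ≤ n → ∀ ω, K n ω ∈ Finset.Icc 1 (n - 1))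
    (hKindep : ∀ n, IndepFun (fun ω (i : Fin n) => T n (i + 1) ω) (K n) ℙ)
    (hKdist : ∀ n, 2 ≤ n → ∀ k ∈ Finset.Icc 1 (n - 1),
      ℙ {ω | K n ω = k} = ENNReal.ofReal
        (2 * ((n : ℝ) + 1) / (((n : ℝ) - 1) * ((k : ℝ) + 2) * ((k : ℝ) + 1))))
    (y : ℝ) (hy0 : 0 < y) (hy1 : y < 1) :
    Tendsto (fun n : ℕ =>
        (n : ℝ) ^ y *
          ∫ ω, Real.exp (-y * ∑ i ∈ Finset.Icc (K n ω + 1) n, T n i ω) ∂ℙ)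
      atTop (nhds ((1 + y) / (1 - y) * Real.Gamma (y + 1))) := by
  refine (tendsto_natCast_rpow_mul_sum_yule (by linarith) hy1).congr' ?_
  filter_upwards [eventually_ge_atTop 2] with n hn
  have hn' : (1 : ℝ) ≤ n := by exact_mod_cast (by omega : 1 ≤ n)
  rw [integral_exp_neg_mul_sum_Icc_of_indepFun (hTmeas n) (hTindep n) (hTexp n) (hKmeas n)
    (hKrange n hn) (hKindep n) (by linarith)]
  congr 1
  refine Finset.sum_congr rfl fun k hk => ?_
  have hprob_nonneg : 0 ≤ 2 * ((n : ℝ) + 1) / ((n - 1) * (k + 2) * (k + 1)) :=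
    div_nonneg (by positivity) (by have := sub_nonneg.mpr hn'; positivity)
  rw [measureReal_def, hKdist n hn k hk, ENNReal.toReal_ofReal hprob_nonneg]

/-- For each `n ≥ 2` let `T_1, …, T_n` be independent exponentials of rates
`1, …, n` and `K` an independent index with
`P(K = k) = 2(n+1)/((n−1)(k+2)(k+1))` on `{1, …, n−1}`; set
`τ⁽ⁿ⁾ = T_{K+1} + … + T_n`.  Then for `0 < y < 1`,
`n^y · E[e^{−y·τ⁽ⁿ⁾}] → ((1+y)/(1−y)) Γ(y+1)` as `n → ∞`. -/
theorem statement10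
    (Ω : ℕ → Type*) [∀ n, MeasureSpace (Ω n)]
    [∀ n, IsProbabilityMeasure (ℙ : Measure (Ω n))]
    (T : ∀ n, ℕ → Ω n → ℝ) (K : ∀ n, Ω n → ℕ)
    (hTmeas : ∀ n i, Measurable (T n i))
    (hTindep : ∀ n, iIndepFun (T n) ℙ)
    (hTexp : ∀ n, ∀ i ∈ Finset.Icc 1 n, Measure.map (T n i) ℙ = expMeasure i)
    (hKmeas : ∀ n, Measurable (K n))
    (hKrange : ∀ n, 2 ≤ n → ∀ ω, K n ω ∈ Finset.Icc 1 (n - 1))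
    (hKindep : ∀ n, IndepFun (fun ω (i : Fin n) => T n (i + 1) ω) (K n) ℙ)
    (hKdist : ∀ n, 2 ≤ n → ∀ k ∈ Finset.Icc 1 (n - 1),
      ℙ {ω | K n ω = k} = ENNReal.ofReal
        (2 * ((n : ℝ) + 1) / (((n : ℝ) - 1) * ((k : ℝ) + 2) * ((k : ℝ) + 1))))
    (y : ℝ) (hy0 : 0 < y) (hy1 : y < 1) :
    Tendsto (fun n : ℕ =>
        (n : ℝ) ^ y *
          ∫ ω, Real.exp (-y * ∑ i ∈ Finset.Icc (K n ω + 1) n, T n i ω) ∂ℙ)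
      atTop (nhds ((1 + y) / (1 - y) * Real.Gamma (y + 1))) :=
  statement10_general Ω T K hTmeas hTindep hTexp hKmeas hKrange hKindep hKdist y hy0 hy1
end

section
/- Fix an integer n ≥ 2, reals α > 0 with α ≠ 1/2, and δ ∈ ℝ. Let T_1, …, T_n be independent random variables with T_i exponentially distributed with rate i, and let K be an independent random index in {1, …, n−1} with P(K = k) = 2(n+1)/((n−1)(k+2)(k+1)); set U_n = T_1 + … + T_n and τ^{(n)} = T_{K+1} + … + T_n. Then the interspecies correlation ρ_n := 1 − (1 − E[e^{−2α·τ^{(n)}}]) / (1 − E[e^{−2α·U_n}] + δ²·Var(e^{−α·U_n})) satisfies ρ_n = 1 − (2α(n−1) + (n+1)((1+2α)·b_{n,2α} − 1)) / ((n−1)(2α−1)(1 + (δ²−1)·b_{n,2α} − δ²·b_{n,α}²)). -/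
/-!
Laplace transforms of independent exponential variables multiply, so with `T_i ~ Exp(i)` one
gets `E[e^{-x U_n}] = b_{n,x}`, which gives the two moments entering the variance of `e^{-α U_n}`.
Since `K` is independent of the `T_i`, conditioning on `K = k` turns `E[e^{-x τ⁽ⁿ⁾}]` into
`∑ₖ P(K = k) ∏_{i=k+1}^n i/(x+i)`. This sum telescopes: with
`G m = 2/(m+1) ∏_{i=m+1}^n i/(x+i)`, its `k`-th term is `(n+1)/((n-1)(x-1)) (G (k+1) - G k)`,
and `G n = 2/(n+1)`, `G 1 = (1+x) b_{n,x}`.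
-/

open MeasureTheory ProbabilityTheory Real Finset

namespace ProbabilityTheory

lemma exponentialPDF_mul_exp_mul {r t : ℝ} (hr : 0 < r) (ht : t < r) (x : ℝ) :
    exponentialPDF r x * ENNReal.ofReal (exp (t * x))
      = ENNReal.ofReal (r / (r - t)) * exponentialPDF (r - t) x := by
  have hrt : 0 < r - t := sub_pos.2 ht
  rcases le_or_gt 0 x with hx | hx
  · rw [exponentialPDF_of_nonneg hx, exponentialPDF_of_nonneg hx,
      ← ENNReal.ofReal_mul (by positivity), ← ENNReal.ofReal_mul (by positivity), mul_assoc,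
      ← exp_add, ← mul_assoc, div_mul_cancel₀ _ hrt.ne']
    ring_nf
  · simp [exponentialPDF_of_neg hx]

lemma lintegral_exp_mul_expMeasure {r t : ℝ} (hr : 0 < r) (ht : t < r) :
    ∫⁻ x, ENNReal.ofReal (exp (t * x)) ∂expMeasure r = ENNReal.ofReal (r / (r - t)) := by
  change ∫⁻ x, _ ∂volume.withDensity (exponentialPDF r) = _
  rw [lintegral_withDensity_eq_lintegral_mul _ (f := exponentialPDF r)
    (measurable_exponentialPDFReal r).ennreal_ofReal (by fun_prop)]
  simp only [Pi.mul_apply, exponentialPDF_mul_exp_mul hr ht]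
  rw [lintegral_const_mul _ (f := exponentialPDF (r - t))
      (measurable_exponentialPDFReal _).ennreal_ofReal,
    lintegral_exponentialPDF_eq_one (sub_pos.2 ht), mul_one]

lemma integrable_exp_mul_expMeasure {r t : ℝ} (hr : 0 < r) (ht : t < r) :
    Integrable (fun x => exp (t * x)) (expMeasure r) := by
  refine (lintegral_ofReal_ne_top_iff_integrable (by fun_prop)
    (.of_forall fun x => (exp_pos _).le)).1 ?_
  rw [lintegral_exp_mul_expMeasure hr ht]
  exact ENNReal.ofReal_ne_top

lemma mgf_id_expMeasure_s18 {r t : ℝ} (hr : 0 < r) (ht : t < r) :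
    mgf id (expMeasure r) t = r / (r - t) := by
  rw [mgf, integral_eq_lintegral_of_nonneg_ae (.of_forall fun x => (exp_pos _).le)
    (by fun_prop)]
  simp only [id]
  rw [lintegral_exp_mul_expMeasure hr ht,
    ENNReal.toReal_ofReal (div_nonneg hr.le (sub_pos.2 ht).le)]

section General

variable {Ω : Type*} [MeasurableSpace Ω] {μ : Measure Ω}

section ExpSum

variable {ι : Type*} {X : ι → Ω → ℝ} {rate : ι → ℝ} {s : Finset ι} {t : ℝ}

lemma integral_exp_mul_sum_of_expMeasure (hind : iIndepFun X μ) (hmeas : ∀ i, Measurable (X i))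
    (hX : ∀ i ∈ s, μ.map (X i) = expMeasure (rate i)) (hrate : ∀ i ∈ s, 0 < rate i)
    (ht : ∀ i ∈ s, t < rate i) :
    ∫ ω, exp (t * ∑ i ∈ s, X i ω) ∂μ = ∏ i ∈ s, rate i / (rate i - t) := by
  have hmgf : ∫ ω, exp (t * ∑ i ∈ s, X i ω) ∂μ = mgf (∑ i ∈ s, X i) μ t := by
    simp only [mgf, Finset.sum_apply]
  rw [hmgf, hind.mgf_sum hmeas]
  refine prod_congr rfl fun i hi => ?_
  rw [← mgf_id_map (hmeas i).aemeasurable, hX i hi, mgf_id_expMeasure_s18 (hrate i hi) (ht i hi)]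

lemma integrable_exp_mul_sum_of_expMeasure [IsFiniteMeasure μ] (hind : iIndepFun X μ)
    (hmeas : ∀ i, Measurable (X i)) (hX : ∀ i ∈ s, μ.map (X i) = expMeasure (rate i))
    (hrate : ∀ i ∈ s, 0 < rate i) (ht : ∀ i ∈ s, t < rate i) :
    Integrable (fun ω => exp (t * ∑ i ∈ s, X i ω)) μ := by
  have h := hind.integrable_exp_mul_sum hmeas (s := s) (t := t) fun i hi => by
    have hint := integrable_exp_mul_expMeasure (hrate i hi) (ht i hi)
    rw [← hX i hi] at hint
    exact (integrable_map_measure (by fun_prop) (hmeas i).aemeasurable).1 hint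
  simpa only [Finset.sum_apply] using h

end ExpSum

lemma variance_exp_neg_mul [IsProbabilityMeasure μ] {X : Ω → ℝ} (hX : AEMeasurable X μ)
    {t : ℝ} (h : Integrable (fun ω => exp (-(2 * t) * X ω)) μ) :
    variance (fun ω => exp (-t * X ω)) μ
      = ∫ ω, exp (-(2 * t) * X ω) ∂μ - (∫ ω, exp (-t * X ω) ∂μ) ^ 2 := by
  have hsq : ∀ ω, exp (-t * X ω) ^ 2 = exp (-(2 * t) * X ω) := fun ω => by
    rw [← exp_nat_mul]; ring_nf
  rw [variance_eq_sub
    ((memLp_two_iff_integrable_sq (by fun_prop)).2 (by simpa only [hsq] using h))]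
  simp only [Pi.pow_apply, hsq]

lemma integral_comp_eq_sum_measureReal_mul {E β : Type*} [MeasurableSpace E]
    [MeasurableSpace β] [MeasurableSingletonClass β] {X : Ω → E} {K : Ω → β}
    (hK : Measurable K) (hind : IndepFun X K μ) {s : Finset β} (hKs : ∀ ω, K ω ∈ s)
    {f : β → E → ℝ} (hf : ∀ k ∈ s, Measurable (f k))
    (hfi : ∀ k ∈ s, Integrable (fun ω => f k (X ω)) μ) :
    ∫ ω, f (K ω) (X ω) ∂μ = ∑ k ∈ s, μ.real {ω | K ω = k} * ∫ ω, f k (X ω) ∂μ := by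
  classical
  have hK' : ∀ k, MeasurableSet {ω | K ω = k} := fun k => hK (measurableSet_singleton k)
  have hsplit : ∀ ω,
      f (K ω) (X ω) = ∑ k ∈ s, {ω | K ω = k}.indicator (fun ω => f k (X ω)) ω := fun ω => by
    rw [sum_eq_single_of_mem (K ω) (hKs ω)]
    · exact (Set.indicator_of_mem (s := {ω' | K ω' = K ω}) rfl (fun ω' => f (K ω) (X ω'))).symm
    · exact fun k _ hk => Set.indicator_of_notMem (fun h => hk h.symm) _
  simp_rw [hsplit]
  rw [integral_finsetSum _ fun k hk => (hfi k hk).indicator (hK' k)]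
  refine sum_congr rfl fun k hk => ?_
  have hone : Measurable (({k} : Set β).indicator (1 : β → ℝ)) :=
    measurable_one.indicator (measurableSet_singleton k)
  have hprod : {ω | K ω = k}.indicator (fun ω => f k (X ω))
      = (fun ω => ({k} : Set β).indicator (1 : β → ℝ) (K ω)) * fun ω => f k (X ω) := by
    ext ω; by_cases h : K ω = k <;> simp [Set.indicator_apply, h]
  have hind_k : IndepFun (fun ω => ({k} : Set β).indicator (1 : β → ℝ) (K ω))
      (fun ω => f k (X ω)) μ := hind.symm.comp hone (hf k hk)
  rw [hprod, hind_k.integral_mul_eq_mul_integral (hone.comp hK).aestronglyMeasurable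
    (hfi k hk).aestronglyMeasurable, ← integral_indicator_one (hK' k)]
  rfl

end General

end ProbabilityTheory

lemma Finset.prod_Icc_eq_mul_prod_Icc_succ {M : Type*} [CommMonoid M] (f : ℕ → M) {k n : ℕ}
    (h : k ≤ n) : ∏ i ∈ Icc k n, f i = f k * ∏ i ∈ Icc (k + 1) n, f i := by
  rw [Icc_add_one_left_eq_Ioc, mul_prod_Ioc_eq_prod_Icc h]

lemma Finset.sum_fin_filter_le_eq_sum_Icc {M : Type*} [AddCommMonoid M] (g : ℕ → M) (k n : ℕ) :
    ∑ j : Fin n with k ≤ j.val, g (j.val + 1) = ∑ i ∈ Icc (k + 1) n, g i := by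
  rw [sum_filter, Fin.sum_univ_eq_sum_range (fun j => if k ≤ j then g (j + 1) else 0),
    ← sum_filter]
  have hfilter : {j ∈ range n | k ≤ j} = Ico k n := by
    ext j; simp only [mem_filter, mem_range, mem_Ico]; omega
  rw [hfilter, sum_Ico_add' g, Ico_add_one_right_eq_Icc]

lemma sum_Icc_weight_mul_prod (n : ℕ) (hn : 2 ≤ n) {x : ℝ} (hx : -1 < x) (hx1 : x ≠ 1) :
    ∑ k ∈ Icc 1 (n - 1), 2 * ((n : ℝ) + 1) / (((n : ℝ) - 1) * ((k : ℝ) + 2) * ((k : ℝ) + 1))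
        * ∏ i ∈ Icc (k + 1) n, (i : ℝ) / (x + i)
      = 1 - (x * ((n : ℝ) - 1)
          + ((n : ℝ) + 1) * ((1 + x) * ∏ i ∈ Icc 1 n, (i : ℝ) / (x + i) - 1))
          / (((n : ℝ) - 1) * (x - 1)) := by
  set G : ℕ → ℝ := fun m => 2 / ((m : ℝ) + 1) * ∏ i ∈ Icc (m + 1) n, (i : ℝ) / (x + i) with hG
  have hn1 : (n : ℝ) - 1 ≠ 0 := by
    have : (2 : ℝ) ≤ n := by exact_mod_cast hn
    linarith
  have hx1' : x - 1 ≠ 0 := sub_ne_zero.2 hx1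
  have hstep : ∀ k ∈ Icc 1 (n - 1),
      2 * ((n : ℝ) + 1) / (((n : ℝ) - 1) * ((k : ℝ) + 2) * ((k : ℝ) + 1))
        * ∏ i ∈ Icc (k + 1) n, (i : ℝ) / (x + i)
      = ((n : ℝ) + 1) / (((n : ℝ) - 1) * (x - 1)) * (G (k + 1) - G k) := by
    intro k hk
    have hkn : k + 1 ≤ n := by rw [mem_Icc] at hk; omega
    have hxk : x + ((k : ℝ) + 1) ≠ 0 := by have := k.cast_nonneg (α := ℝ); linarith
    simp only [hG, prod_Icc_eq_mul_prod_Icc_succ _ hkn]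
    push_cast
    field_simp
    ring
  have hG1 : G 1 = (1 + x) * ∏ i ∈ Icc 1 n, (i : ℝ) / (x + i) := by
    have hx0 : x + 1 ≠ 0 := by linarith
    simp only [hG, prod_Icc_eq_mul_prod_Icc_succ _ (by omega : 1 ≤ n)]
    push_cast
    field_simp
    ring
  have hGn : G n = 2 / ((n : ℝ) + 1) := by simp [hG]
  rw [sum_congr rfl hstep, ← mul_sum, sum_Icc_sub (by omega : 1 ≤ n - 1) G,
    Nat.sub_add_cancel (by omega : 1 ≤ n), hGn, hG1]
  field_simp
  ring

section Yule

variable {Ω : Type*} [MeasureSpace Ω] {n : ℕ} {T : ℕ → Ω → ℝ}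
  (hTmeas : ∀ i, Measurable (T i)) (hTindep : iIndepFun T ℙ)
  (hTexp : ∀ i ∈ Icc 1 n, Measure.map (T i) ℙ = expMeasure i)
include hTmeas hTindep hTexp

lemma integral_exp_neg_mul_sum_yule {s : Finset ℕ} (hs : s ⊆ Icc 1 n) {c : ℝ} (hc : -1 < c) :
    ∫ ω, exp (-c * ∑ i ∈ s, T i ω) ∂ℙ = ∏ i ∈ s, (i : ℝ) / (c + i) := by
  have hi : ∀ i ∈ s, (1 : ℝ) ≤ i := fun i hi => by exact_mod_cast (mem_Icc.1 (hs hi)).1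
  rw [integral_exp_mul_sum_of_expMeasure (rate := fun i : ℕ => (i : ℝ)) hTindep hTmeas
    (fun i h => hTexp i (hs h)) (fun i h => by linarith [hi i h])
    (fun i h => by linarith [hi i h])]
  simp only [sub_neg_eq_add, add_comm]

lemma integrable_exp_neg_mul_sum_yule [IsFiniteMeasure (ℙ : Measure Ω)] {s : Finset ℕ}
    (hs : s ⊆ Icc 1 n) {c : ℝ} (hc : -1 < c) :
    Integrable (fun ω => exp (-c * ∑ i ∈ s, T i ω)) ℙ := by
  have hi : ∀ i ∈ s, (1 : ℝ) ≤ i := fun i hi => by exact_mod_cast (mem_Icc.1 (hs hi)).1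
  exact integrable_exp_mul_sum_of_expMeasure (rate := fun i : ℕ => (i : ℝ)) hTindep hTmeas
    (fun i h => hTexp i (hs h)) (fun i h => by linarith [hi i h])
    (fun i h => by linarith [hi i h])

lemma integral_exp_neg_mul_tau [IsFiniteMeasure (ℙ : Measure Ω)] (hn : 2 ≤ n) {c : ℝ}
    (hc : -1 < c) (hc1 : c ≠ 1) {K : Ω → ℕ} (hKmeas : Measurable K)
    (hKrange : ∀ ω, K ω ∈ Icc 1 (n - 1))
    (hKindep : IndepFun (fun ω (i : Fin n) => T (i + 1) ω) K ℙ)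
    (hKdist : ∀ k ∈ Icc 1 (n - 1), ℙ {ω | K ω = k} = ENNReal.ofReal
        (2 * ((n : ℝ) + 1) / (((n : ℝ) - 1) * ((k : ℝ) + 2) * ((k : ℝ) + 1)))) :
    ∫ ω, exp (-c * ∑ i ∈ Icc (K ω + 1) n, T i ω) ∂ℙ
      = 1 - (c * ((n : ℝ) - 1)
          + ((n : ℝ) + 1) * ((1 + c) * ∏ i ∈ Icc 1 n, (i : ℝ) / (c + i) - 1))
          / (((n : ℝ) - 1) * (c - 1)) := by
  set f : ℕ → (Fin n → ℝ) → ℝ := fun k v => exp (-c * ∑ j : Fin n with k ≤ j.val, v j)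
  have hf : ∀ k ω,
      f k (fun j : Fin n => T (j + 1) ω) = exp (-c * ∑ i ∈ Icc (k + 1) n, T i ω) :=
    fun k ω => by simp only [f, sum_fin_filter_le_eq_sum_Icc (fun i => T i ω)]
  have htail : ∀ k ∈ Icc 1 (n - 1), Icc (k + 1) n ⊆ Icc 1 n :=
    fun k _ => Icc_subset_Icc (by omega) le_rfl
  have hweight : ∀ k ∈ Icc 1 (n - 1), Measure.real ℙ {ω | K ω = k}
      = 2 * ((n : ℝ) + 1) / (((n : ℝ) - 1) * ((k : ℝ) + 2) * ((k : ℝ) + 1)) := fun k hk => by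
    have hn1 : (1 : ℝ) < n := by exact_mod_cast hn
    rw [measureReal_def, hKdist k hk, ENNReal.toReal_ofReal]
    exact div_nonneg (by positivity)
      (mul_nonneg (mul_nonneg (by linarith) (by positivity)) (by positivity))
  calc ∫ ω, exp (-c * ∑ i ∈ Icc (K ω + 1) n, T i ω) ∂ℙ
      = ∫ ω, f (K ω) (fun j : Fin n => T (j + 1) ω) ∂ℙ := by simp only [hf]
    _ = ∑ k ∈ Icc 1 (n - 1),
          Measure.real ℙ {ω | K ω = k} * ∫ ω, f k (fun j : Fin n => T (j + 1) ω) ∂ℙ :=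
        integral_comp_eq_sum_measureReal_mul hKmeas hKindep hKrange
          (fun k _ => by simp only [f]; fun_prop) fun k hk => by
            simpa only [hf] using
              integrable_exp_neg_mul_sum_yule hTmeas hTindep hTexp (htail k hk) hc
    _ = ∑ k ∈ Icc 1 (n - 1), 2 * ((n : ℝ) + 1) / (((n : ℝ) - 1) * ((k : ℝ) + 2) * ((k : ℝ) + 1))
          * ∏ i ∈ Icc (k + 1) n, (i : ℝ) / (c + i) := sum_congr rfl fun k hk => by
        rw [hweight k hk]
        simp only [hf, integral_exp_neg_mul_sum_yule hTmeas hTindep hTexp (htail k hk) hc]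
    _ = _ := sum_Icc_weight_mul_prod n hn hc hc1

end Yule

/-- Closed form of the interspecies correlation (Lemma 4 of the paper,
`α ≠ 1/2`): with `U_n = T_1 + … + T_n` and `τ⁽ⁿ⁾ = T_{K+1} + … + T_n`,
`ρ_n = 1 − (1 − E[e^{−2ατ⁽ⁿ⁾}])/(1 − E[e^{−2αU_n}] + δ² Var(e^{−αU_n}))`
equals
`1 − (2α(n−1) + (n+1)((1+2α) b_{n,2α} − 1)) / ((n−1)(2α−1)(1 + (δ²−1) b_{n,2α} − δ² b_{n,α}²))`,
where `b_{n,x} = ∏_{i=1}^n i/(x+i)`. -/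
theorem statement18 {Ω : Type*} [MeasureSpace Ω] [IsProbabilityMeasure (ℙ : Measure Ω)]
    (n : ℕ) (hn : 2 ≤ n) (α δ : ℝ) (hα : 0 < α) (hα2 : α ≠ 1 / 2)
    (T : ℕ → Ω → ℝ) (K : Ω → ℕ)
    (hTmeas : ∀ i, Measurable (T i))
    (hTindep : iIndepFun T ℙ)
    (hTexp : ∀ i ∈ Finset.Icc 1 n, Measure.map (T i) ℙ = expMeasure i)
    (hKmeas : Measurable K)
    (hKrange : ∀ ω, K ω ∈ Finset.Icc 1 (n - 1))
    (hKindep : IndepFun (fun ω (i : Fin n) => T (i + 1) ω) K ℙ)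
    (hKdist : ∀ k ∈ Finset.Icc 1 (n - 1),
      ℙ {ω | K ω = k} = ENNReal.ofReal
        (2 * ((n : ℝ) + 1) / (((n : ℝ) - 1) * ((k : ℝ) + 2) * ((k : ℝ) + 1)))) :
    1 - (1 - ∫ ω, Real.exp (-(2 * α) * ∑ i ∈ Finset.Icc (K ω + 1) n, T i ω) ∂ℙ)
        / (1 - (∫ ω, Real.exp (-(2 * α) * ∑ i ∈ Finset.Icc 1 n, T i ω) ∂ℙ)
            + δ ^ 2 * variance (fun ω => Real.exp (-α * ∑ i ∈ Finset.Icc 1 n, T i ω)) ℙ)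
      = 1 - (2 * α * ((n : ℝ) - 1)
            + ((n : ℝ) + 1) * ((1 + 2 * α) * (∏ i ∈ Finset.Icc 1 n, (i : ℝ) / (2 * α + i)) - 1))
          / (((n : ℝ) - 1) * (2 * α - 1)
            * (1 + (δ ^ 2 - 1) * (∏ i ∈ Finset.Icc 1 n, (i : ℝ) / (2 * α + i))
              - δ ^ 2 * (∏ i ∈ Finset.Icc 1 n, (i : ℝ) / (α + i)) ^ 2)) := by
  have h2α : -1 < 2 * α := by linarith
  have hU := integral_exp_neg_mul_sum_yule hTmeas hTindep hTexp subset_rfl h2α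
  have hvar : variance (fun ω => Real.exp (-α * ∑ i ∈ Finset.Icc 1 n, T i ω)) ℙ
      = (∏ i ∈ Finset.Icc 1 n, (i : ℝ) / (2 * α + i))
        - (∏ i ∈ Finset.Icc 1 n, (i : ℝ) / (α + i)) ^ 2 := by
    rw [variance_exp_neg_mul (by fun_prop)
        (integrable_exp_neg_mul_sum_yule hTmeas hTindep hTexp subset_rfl h2α), hU,
      integral_exp_neg_mul_sum_yule hTmeas hTindep hTexp subset_rfl (by linarith)]
  have hτ := integral_exp_neg_mul_tau hTmeas hTindep hTexp hn h2α
    (by contrapose! hα2; linarith) hKmeas hKrange hKindep hKdist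
  rw [hτ, hU, hvar, sub_sub_cancel, div_div]
  congr 3
  ring
end
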